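/- Let p be a non-zero polynomial on ℂⁿ and suppose f is an entire function of exponential type, g is entire, and f = p·g. Then g is of exponential type. -/

import Mathlib

/-- The Euclidean norm on ℂⁿ. -/
noncomputable def enorm' {n : ℕ} (z : Fin n → ℂ) : ℝ :=
  Real.sqrt (∑ i, ‖z i‖ ^ 2)

/-- A function on ℂⁿ is of exponential type. -/
def ExpType {n : ℕ} (f : (Fin n → ℂ) → ℂ) : Prop :=
  ∃ A > (0:ℝ), ∃ M ≥ (0:ℝ), ∀ z, ‖f z‖ ≤ M * Real.exp (A * enorm' z)

/-! Restrict to complex lines `t ↦ z + t • v`, with `v` chosen so that the top homogeneous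
component `p_d` of `p` does not vanish at `v`. Then `t ↦ p (z + t • v)` is a polynomial of degree
`d` with leading coefficient `p_d v`, independent of `z`. It has at most `d` roots, so on one of the
circles `‖t‖ = 1, 3, …, 2d + 1` every factor `t - a` has norm at least `1`, whence
`‖p (z + t • v)‖ ≥ ‖p_d v‖` there. On that circle `‖g‖ ≤ ‖f‖ / ‖p_d v‖`, which is at most
`M exp (A (‖z‖ + (2d + 1) ‖v‖)) / ‖p_d v‖`, and the maximum modulus principle transfers the bound
to `g z`. -/

open Polynomial

/-- `x` lies within distance `1` of `2k + 1` only for `k = ⌊x / 2⌋`, so some `k ≤ #S` is missed. -/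
lemma exists_odd_far_from_finset (S : Finset ℝ) :
    ∃ k ≤ S.card, ∀ x ∈ S, 1 ≤ |(2 * k + 1 : ℝ) - x| := by
  obtain ⟨k, hk, hkS⟩ := Finset.exists_mem_notMem_of_card_lt_card
    (s := S.image fun x => ⌊x / 2⌋₊) (t := Finset.range (S.card + 1))
    (Finset.card_image_le.trans_lt (by simp))
  refine ⟨k, Nat.lt_succ_iff.mp (Finset.mem_range.mp hk), fun x hx => ?_⟩
  by_contra! hlt
  rw [abs_lt] at hlt
  refine hkS (Finset.mem_image.mpr ⟨x, hx, (Nat.floor_eq_iff ?_).mpr ⟨?_, ?_⟩⟩) <;>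
    linarith [(k.cast_nonneg : (0 : ℝ) ≤ k)]

namespace Polynomial

lemma norm_leadingCoeff_le_norm_eval {P : ℂ[X]} {t : ℂ} (h : ∀ a ∈ P.roots, 1 ≤ ‖t - a‖) :
    ‖P.leadingCoeff‖ ≤ ‖P.eval t‖ := by
  rw [(IsAlgClosed.splits P).eval_eq_prod_roots, norm_mul]
  refine le_mul_of_one_le_right (norm_nonneg _) <|
    (Multiset.one_le_prod fun x hx => ?_).trans_eq (map_multiset_prod (normHom (α := ℂ)) _).symm
  obtain ⟨a, ha, rfl⟩ := Multiset.mem_map.mp (Multiset.map_map _ _ _ ▸ hx)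
  exact h a ha

lemma exists_radius_norm_leadingCoeff_le_norm_eval (P : ℂ[X]) :
    ∃ r : ℝ, 1 ≤ r ∧ r ≤ 2 * P.natDegree + 1 ∧
      ∀ t : ℂ, ‖t‖ = r → ‖P.leadingCoeff‖ ≤ ‖P.eval t‖ := by
  obtain ⟨k, hk, hfar⟩ := exists_odd_far_from_finset (P.roots.toFinset.image (‖·‖))
  have hkd : (k : ℝ) ≤ P.natDegree := by
    exact_mod_cast hk.trans <| Finset.card_image_le.trans <|
      (Multiset.toFinset_card_le _).trans P.card_roots'
  refine ⟨2 * k + 1, by linarith [(k.cast_nonneg : (0 : ℝ) ≤ k)], by linarith,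
    fun t ht => norm_leadingCoeff_le_norm_eval fun a ha => ?_⟩
  calc (1 : ℝ) ≤ |‖t‖ - ‖a‖| :=
        ht ▸ hfar _ (Finset.mem_image_of_mem _ (Multiset.mem_toFinset.mpr ha))
    _ ≤ ‖t - a‖ := abs_norm_sub_norm_le t a

end Polynomial

namespace MvPolynomial

variable {σ R S : Type*} [CommSemiring R] [CommSemiring S] [Algebra R S]

lemma aeval_monomial_eq_multiset_prod (x : σ → S) (s : σ →₀ ℕ) (c : R) :
    aeval x (monomial s c) = algebraMap R S c * (s.toMultiset.map x).prod := by
  rw [aeval_monomial, Finsupp.toMultiset_map, Finsupp.prod_toMultiset,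
    Finsupp.prod_mapDomain_index pow_zero pow_add]

lemma card_map_toMultiset {α : Type*} (x : σ → α) (s : σ →₀ ℕ) :
    Multiset.card (s.toMultiset.map x) = s.degree := by
  rw [Multiset.card_map, Finsupp.card_toMultiset, Finsupp.degree_apply]
  rfl

section LinearSubstitution

variable {q : σ → R[X]}

lemma natDegree_aeval_monomial_le (hq : ∀ i, (q i).natDegree ≤ 1) (s : σ →₀ ℕ) (c : R) :
    (aeval q (monomial s c)).natDegree ≤ s.degree := by
  rw [aeval_monomial_eq_multiset_prod, ← card_map_toMultiset q]
  refine natDegree_C_mul_le _ _ |>.trans <| natDegree_multiset_prod_le _ |>.trans ?_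
  calc _ ≤ (s.toMultiset.map fun _ => 1).sum := by
        rw [Multiset.map_map]
        exact Multiset.sum_map_le_sum_map _ _ fun i _ => hq i
    _ = _ := by simp

lemma coeff_aeval_monomial_degree (hq : ∀ i, (q i).natDegree ≤ 1) (s : σ →₀ ℕ) (c : R) :
    (aeval q (monomial s c)).coeff s.degree = eval (fun i => (q i).coeff 1) (monomial s c) := by
  have h := coeff_multiset_prod_of_natDegree_le (s.toMultiset.map q) 1
    (by simpa using fun i _ => hq i)
  rw [mul_one, card_map_toMultiset] at h
  rw [aeval_monomial_eq_multiset_prod, Polynomial.algebraMap_eq, Polynomial.coeff_C_mul, h,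
    Multiset.map_map]
  exact (aeval_monomial_eq_multiset_prod _ s c).symm

lemma natDegree_aeval_le_totalDegree (hq : ∀ i, (q i).natDegree ≤ 1) (p : MvPolynomial σ R) :
    (aeval q p).natDegree ≤ p.totalDegree := by
  conv_lhs => rw [p.as_sum, map_sum]
  exact natDegree_sum_le_of_forall_le _ _ fun s hs =>
    (natDegree_aeval_monomial_le hq s _).trans (le_totalDegree hs)

lemma coeff_aeval_of_totalDegree_le (hq : ∀ i, (q i).natDegree ≤ 1) {p : MvPolynomial σ R}
    {d : ℕ} (hd : p.totalDegree ≤ d) :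
    (aeval q p).coeff d = eval (fun i => (q i).coeff 1) (homogeneousComponent d p) := by
  conv_lhs => rw [p.as_sum, map_sum, finsetSum_coeff]
  rw [homogeneousComponent_apply, map_sum, Finset.sum_filter]
  refine Finset.sum_congr rfl fun s hs => ?_
  split_ifs with h
  · rw [← h]
    exact coeff_aeval_monomial_degree hq s _
  · exact coeff_eq_zero_of_natDegree_lt <|
      (natDegree_aeval_monomial_le hq s _).trans_lt (((le_totalDegree hs).trans hd).lt_of_ne h)

end LinearSubstitution

lemma homogeneousComponent_totalDegree_ne_zero {p : MvPolynomial σ R} (hp : p ≠ 0) :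
    homogeneousComponent p.totalDegree p ≠ 0 := by
  obtain ⟨s, hs, hdeg⟩ := Finset.exists_mem_eq_sup p.support (support_nonempty.mpr hp)
    fun s : σ →₀ ℕ => s.sum fun _ e => e
  refine ne_of_apply_ne (coeff s) ?_
  rw [coeff_homogeneousComponent, if_pos (by exact hdeg.symm), coeff_zero]
  exact mem_support_iff.mp hs

lemma exists_eval_homogeneousComponent_totalDegree_ne_zero {K : Type*} [Field K] [Infinite K]
    {p : MvPolynomial σ K} (hp : p ≠ 0) :
    ∃ v : σ → K, eval v (homogeneousComponent p.totalDegree p) ≠ 0 := by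
  by_contra! h
  exact homogeneousComponent_totalDegree_ne_zero hp (funext fun v => by simp [h v])

lemma exists_forall_circle_le_norm_eval_add_smul {p : MvPolynomial σ ℂ} (hp : p ≠ 0) :
    ∃ v : σ → ℂ, ∃ c > 0, ∀ z : σ → ℂ, ∃ r : ℝ, 1 ≤ r ∧ r ≤ 2 * p.totalDegree + 1 ∧
      ∀ t : ℂ, ‖t‖ = r → c ≤ ‖eval (z + t • v) p‖ := by
  obtain ⟨v, hv⟩ := exists_eval_homogeneousComponent_totalDegree_ne_zero hp
  refine ⟨v, _, norm_pos_iff.mpr hv, fun z => ?_⟩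
  set q : σ → ℂ[X] := fun i => Polynomial.C (v i) * Polynomial.X + Polynomial.C (z i)
  have hq : ∀ i, (q i).natDegree ≤ 1 := fun _ => natDegree_linear_le
  have hcoeff :
      (aeval q p).coeff p.totalDegree = eval v (homogeneousComponent p.totalDegree p) := by
    simp [coeff_aeval_of_totalDegree_le hq le_rfl, q]
  have hdeg : (aeval q p).natDegree = p.totalDegree :=
    (natDegree_aeval_le_totalDegree hq p).antisymm (le_natDegree_of_ne_zero (hcoeff ▸ hv))
  obtain ⟨r, hr1, hr, hlow⟩ := (aeval q p).exists_radius_norm_leadingCoeff_le_norm_eval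
  refine ⟨r, hr1, hdeg ▸ hr, fun t ht => ?_⟩
  have heval : (aeval q p).eval t = eval (z + t • v) p := by
    rw [← Polynomial.coe_aeval_eq_eval, comp_aeval_apply]
    change aeval _ p = aeval _ p
    congr 2 with i
    simp only [q, Polynomial.coe_aeval_eq_eval, Polynomial.eval_add, Polynomial.eval_mul,
      Polynomial.eval_C, Polynomial.eval_X, Pi.add_apply, Pi.smul_apply, smul_eq_mul]
    ring
  rw [← heval, ← hcoeff, ← hdeg]
  exact hlow t ht

end MvPolynomial

lemma enorm'_eq_norm_toLp {n : ℕ} (z : Fin n → ℂ) : enorm' z = ‖WithLp.toLp 2 z‖ := by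
  simp [enorm', EuclideanSpace.norm_eq]

lemma enorm'_add_smul_le {n : ℕ} (z v : Fin n → ℂ) (t : ℂ) :
    enorm' (z + t • v) ≤ enorm' z + ‖t‖ * enorm' v := by
  simpa only [enorm'_eq_norm_toLp, WithLp.toLp_add, WithLp.toLp_smul, norm_smul] using
    norm_add_le (WithLp.toLp 2 z) (t • WithLp.toLp 2 v)

lemma Differentiable.norm_le_of_forall_circle_norm_le {E : Type*} [NormedAddCommGroup E]
    [NormedSpace ℂ E] {g : E → ℂ} (hg : Differentiable ℂ g) (z v : E) {r C : ℝ} (hr : 0 < r)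
    (hC : ∀ t : ℂ, ‖t‖ = r → ‖g (z + t • v)‖ ≤ C) : ‖g z‖ ≤ C := by
  have hline : Differentiable ℂ fun t : ℂ => g (z + t • v) :=
    hg.comp ((differentiable_const z).add (differentiable_id.smul_const v))
  simpa using Complex.norm_le_of_forall_mem_frontier_norm_le (Metric.isBounded_ball (x := 0))
    hline.diffContOnCl (fun t ht => hC t (by simpa [frontier_ball (0 : ℂ) hr.ne'] using ht))
    (subset_closure (Metric.mem_ball_self hr))

theorem stmt_9_general {n : ℕ} (p : MvPolynomial (Fin n) ℂ) (hp : p ≠ 0)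
    (f g : (Fin n → ℂ) → ℂ) (hg : Differentiable ℂ g)
    (hft : ExpType f) (hfg : ∀ z, f z = MvPolynomial.eval z p * g z) :
    ExpType g := by
  obtain ⟨A, hA, M, hM, hf⟩ := hft
  obtain ⟨v, c, hc, hcircle⟩ := MvPolynomial.exists_forall_circle_le_norm_eval_add_smul hp
  set K : ℝ := 2 * p.totalDegree + 1
  refine ⟨A, hA, M * Real.exp (A * (K * enorm' v)) / c, by positivity, fun z => ?_⟩
  obtain ⟨r, hr1, hrK, hpr⟩ := hcircle z
  have hv : 0 ≤ enorm' v := Real.sqrt_nonneg _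
  calc ‖g z‖ ≤ M * Real.exp (A * (enorm' z + r * enorm' v)) / c := by
        refine hg.norm_le_of_forall_circle_norm_le z v (r := r) (by linarith) fun t ht => ?_
        rw [le_div_iff₀ hc]
        calc ‖g (z + t • v)‖ * c ≤ ‖g (z + t • v)‖ * ‖MvPolynomial.eval (z + t • v) p‖ :=
              mul_le_mul_of_nonneg_left (hpr t ht) (norm_nonneg _)
          _ = ‖f (z + t • v)‖ := by rw [hfg, norm_mul, mul_comm]
          _ ≤ M * Real.exp (A * (enorm' z + r * enorm' v)) := by
              refine (hf _).trans ?_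
              gcongr
              exact ht ▸ enorm'_add_smul_le z v t
    _ ≤ M * Real.exp (A * (K * enorm' v)) / c * Real.exp (A * enorm' z) := by
        rw [div_mul_eq_mul_div, mul_assoc, ← Real.exp_add]
        gcongr
        linarith [mul_le_mul_of_nonneg_left (mul_le_mul_of_nonneg_right hrK hv) hA.le]

theorem stmt_9 {n : ℕ} (p : MvPolynomial (Fin n) ℂ) (hp : p ≠ 0)
    (f g : (Fin n → ℂ) → ℂ) (hf : Differentiable ℂ f) (hg : Differentiable ℂ g)
    (hft : ExpType f) (hfg : ∀ z, f z = MvPolynomial.eval z p * g z) :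
    ExpType g :=
  stmt_9_general p hp f g hg hft hfg
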